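/- Let V be a complex vector space of dimension 2m (m ≥ 1) equipped with a nondegenerate alternating bilinear form ⟨ , ⟩, and let F•¹,…,F•ᵃ be finitely many isotropic full flags in V. Then there exists an isotropic full flag E• in V that is simultaneously in linear general position with each F•ᵏ, i.e., dim(Eᵢ ∩ Fⱼᵏ) = max(0, i + j − 2m) for all 0 ≤ i, j ≤ 2m and all k = 1,…,a. -/

import Mathlib

open Module

/-- The annihilator `∠(W) = {v ∈ V | ⟨v,w⟩ = 0 for all w ∈ W}` of a subspace `W`
with respect to a bilinear form `B`. -/
def ann {V : Type*} [AddCommGroup V] [Module ℂ V]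
    (B : LinearMap.BilinForm ℂ V) (W : Submodule ℂ V) : Submodule ℂ V :=
  W.dualAnnihilator.comap B

/-- A full flag `F₀ = 0 ⊊ F₁ ⊊ ⋯ ⊊ F_{2m} = V` with `dim Fᵢ = i`. -/
def IsFullFlag (m : ℕ) {V : Type*} [AddCommGroup V] [Module ℂ V]
    (F : Fin (2 * m + 1) → Submodule ℂ V) : Prop :=
  F 0 = ⊥ ∧ F (Fin.last (2 * m)) = ⊤ ∧ StrictMono F ∧
    ∀ i, finrank ℂ (F i) = (i : ℕ)

/-- The annihilator flag `∠(F•)`, whose `i`-th member is `∠(F_{2m-i})`. -/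
def annFlag (m : ℕ) {V : Type*} [AddCommGroup V] [Module ℂ V]
    (B : LinearMap.BilinForm ℂ V) (F : Fin (2 * m + 1) → Submodule ℂ V) :
    Fin (2 * m + 1) → Submodule ℂ V :=
  fun i => ann B (F i.rev)

/-!
The flag is built from its isotropic half `E₁ ⊂ ⋯ ⊂ E_m`, one vector at a time, keeping
`Eᵢ ∩ Fᵏ_{2m-i} = 0` for every `k`. To pass from `Eᵢ` to `E_{i+1}` one needs a vector of `∠(Eᵢ)`
outside `Eᵢ` and outside each `Eᵢ + Fᵏ_{2m-i-1}`; these subspaces do not contain `∠(Eᵢ)`,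
since otherwise `∠(Eᵢ + Fᵏ_{2m-i-1}) = ∠(Eᵢ) ∩ Fᵏ_{i+1}`, which is nonzero by a dimension count,
would lie in `Eᵢ ∩ Fᵏ_{2m-i}`. As `ℂ` is infinite, finitely many such subspaces cannot cover
`∠(Eᵢ)`. The flag is completed by `E_{2m-i} = ∠(Eᵢ)`; taking annihilators carries the condition
`Eᵢ ∩ Fᵏ_{2m-i} = 0` from `i ≤ m` to `2m - i`, and for two full flags these conditions alone
force `dim (Eᵢ ∩ Fⱼ) = max(0, i + j - 2m)`.
-/

open Submodule

theorem Submodule.exists_mem_forall_notMem_of_forall_not_le {K M ι : Type*} [Field K]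
    [Infinite K] [AddCommGroup M] [Module K M] [Finite ι] (A : Submodule K M)
    (p : ι → Submodule K M) (h : ∀ i, ¬ A ≤ p i) : ∃ x ∈ A, ∀ i, x ∉ p i := by
  obtain ⟨⟨x, hxA⟩, hx⟩ := exists_forall_notMem_of_forall_ne_top
    (fun i => (p i).comap A.subtype) fun i => by simpa only [Ne, comap_subtype_eq_top] using h i
  exact ⟨x, hxA, hx⟩

theorem exists_monotone_seq_of_forall_exists_succ {α : Type*} [Preorder α] (P : α → Prop)
    (f : α → ℕ) (m : ℕ) {a₀ : α} (h₀ : P a₀) (hf₀ : f a₀ = 0)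
    (step : ∀ a, P a → f a < m → ∃ b, a ≤ b ∧ P b ∧ f b = f a + 1) :
    ∃ e : ℕ → α, Monotone e ∧ ∀ i, P (e i) ∧ f (e i) = min i m := by
  have step' : ∀ a : {a // P a ∧ f a ≤ m}, ∃ b : {a // P a ∧ f a ≤ m},
      a.1 ≤ b.1 ∧ f b.1 = min (f a.1 + 1) m := by
    rintro ⟨a, ha, ham⟩
    rcases ham.lt_or_eq with hlt | heq
    · obtain ⟨b, hab, hb, hfb⟩ := step a ha hlt
      refine ⟨⟨b, hb, by omega⟩, hab, ?_⟩
      dsimp only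
      omega
    · refine ⟨⟨a, ha, ham⟩, le_rfl, ?_⟩
      dsimp only
      omega
  choose g hg using step'
  let s : ℕ → {a // P a ∧ f a ≤ m} := fun i => g^[i] ⟨a₀, h₀, by omega⟩
  have hs : ∀ i, s (i + 1) = g (s i) := fun i => Function.iterate_succ_apply' g i _
  refine ⟨fun i => (s i).1, monotone_nat_of_le_succ fun i => ?_, fun i => ⟨(s i).2.1, ?_⟩⟩
  · rw [hs]
    exact (hg _).1
  · induction i with
    | zero => simp [s, hf₀]
    | succ i ih =>
      dsimp only at ih ⊢
      rw [hs, (hg _).2, ih]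
      omega

theorem finrank_inf_eq_of_forall_disjoint_rev {K V : Type*} [Field K] [AddCommGroup V]
    [Module K V] [FiniteDimensional K V] {n : ℕ} (hn : finrank K V = n)
    {E F : Fin (n + 1) → Submodule K V} (hE : Monotone E) (hF : Monotone F)
    (hEr : ∀ i, finrank K (E i) = i) (hFr : ∀ i, finrank K (F i) = i)
    (h : ∀ i, Disjoint (E i) (F i.rev)) (i j : Fin (n + 1)) :
    finrank K ↥(E i ⊓ F j) = i + j - n := by
  by_cases hij : (i : ℕ) + j ≤ n
  · have hj : j ≤ i.rev := by rw [Fin.le_def, Fin.val_rev]; omega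
    rw [((h i).mono_right (hF hj)).eq_bot, finrank_bot]
    omega
  · have hji : j.rev ≤ i := by rw [Fin.le_def, Fin.val_rev]; omega
    have hdisj : Disjoint (E i ⊓ F j) (E j.rev) := by
      simpa only [Fin.rev_rev] using ((h j.rev).mono_right inf_le_right).symm
    have hlower := finrank_sup_add_finrank_inf_eq (E i) (F j)
    have hsup := (E i ⊔ F j).finrank_le
    have hupper := finrank_sup_add_finrank_inf_eq (E i ⊓ F j) (E j.rev)
    have hsub := finrank_mono (sup_le inf_le_left (hE hji) : E i ⊓ F j ⊔ E j.rev ≤ E i)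
    rw [hdisj.eq_bot, finrank_bot, hEr, Fin.val_rev] at hupper
    rw [hEr, hFr] at hlower
    rw [hEr] at hsub
    omega

section Annihilator

variable {V : Type*} [AddCommGroup V] [Module ℂ V] {B : LinearMap.BilinForm ℂ V}

lemma mem_ann_iff {W : Submodule ℂ V} {x : V} : x ∈ ann B W ↔ ∀ w ∈ W, B x w = 0 := by
  simp [ann, mem_comap, mem_dualAnnihilator]

lemma mem_ann_span_singleton_iff {v x : V} : x ∈ ann B (ℂ ∙ v) ↔ B x v = 0 := by
  refine mem_ann_iff.trans ⟨fun h => h v (mem_span_singleton_self v), fun h w hw => ?_⟩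
  obtain ⟨c, rfl⟩ := mem_span_singleton.1 hw
  simp [h]

lemma ann_eq_orthogonal (hr : B.IsRefl) (W : Submodule ℂ V) : ann B W = B.orthogonal W := by
  ext x
  simp only [mem_ann_iff, LinearMap.BilinForm.mem_orthogonal_iff]
  exact ⟨fun h n hn => hr x n (h n hn), fun h w hw => hr w x (h w hw)⟩

lemma ann_antitone {W W' : Submodule ℂ V} (h : W ≤ W') : ann B W' ≤ ann B W :=
  fun _ hx => mem_ann_iff.2 fun w hw => mem_ann_iff.1 hx w (h hw)

lemma ann_sup (W W' : Submodule ℂ V) : ann B (W ⊔ W') = ann B W ⊓ ann B W' := by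
  simp [ann, dualAnnihilator_sup_eq, comap_inf]

lemma sup_span_le_ann_sup_span (halt : B.IsAlt) {W : Submodule ℂ V} {v : V}
    (hW : W ≤ ann B W) (hv : v ∈ ann B W) : W ⊔ ℂ ∙ v ≤ ann B (W ⊔ ℂ ∙ v) := by
  rw [ann_sup]
  refine sup_le (le_inf hW fun w hw => ?_) (le_inf ?_ ?_)
  · exact mem_ann_span_singleton_iff.2 (halt.isRefl v w (mem_ann_iff.1 hv w hw))
  · exact (span_singleton_le_iff_mem _ _).2 hv
  · exact (span_singleton_le_iff_mem _ _).2 (mem_ann_span_singleton_iff.2 (halt v))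

lemma ann_top (hr : B.IsRefl) (hB : B.Nondegenerate) : ann B (⊤ : Submodule ℂ V) = ⊥ := by
  rw [ann_eq_orthogonal hr]
  exact LinearMap.BilinForm.orthogonal_top_eq_bot hB

variable [FiniteDimensional ℂ V]

lemma finrank_ann (hr : B.IsRefl) (hB : B.Nondegenerate) (W : Submodule ℂ V) :
    finrank ℂ (ann B W) = finrank ℂ V - finrank ℂ W := by
  rw [ann_eq_orthogonal hr]
  exact LinearMap.BilinForm.finrank_orthogonal hB W

lemma ann_ann (hr : B.IsRefl) (hB : B.Nondegenerate) (W : Submodule ℂ V) :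
    ann B (ann B W) = W := by
  rw [ann_eq_orthogonal hr, ann_eq_orthogonal hr]
  exact LinearMap.BilinForm.orthogonal_orthogonal hB hr W

lemma ann_eq_self_of_le_ann {m : ℕ} (hdim : finrank ℂ V = 2 * m) (hr : B.IsRefl)
    (hB : B.Nondegenerate) {W : Submodule ℂ V} (hW : W ≤ ann B W) (hWr : finrank ℂ W = m) :
    ann B W = W :=
  (eq_of_le_of_finrank_le hW (by rw [finrank_ann hr hB, hdim, hWr]; omega)).symm

lemma not_ann_le_sup (hr : B.IsRefl) (hB : B.Nondegenerate) {W G : Submodule ℂ V}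
    (hd : Disjoint W (ann B G)) (hlt : finrank ℂ W + finrank ℂ G < finrank ℂ V) :
    ¬ ann B W ≤ W ⊔ G := by
  intro hle
  have hsub : ann B W ⊓ ann B G ≤ W := by
    rw [← ann_sup]
    exact (ann_antitone hle).trans (ann_ann hr hB W).le
  have hbot : ann B W ⊓ ann B G = ⊥ := (hd.mono_left hsub).eq_bot_of_le inf_le_right
  have hdims := finrank_sup_add_finrank_inf_eq (ann B W) (ann B G)
  have hsup := (ann B W ⊔ ann B G).finrank_le
  rw [hbot, finrank_bot, finrank_ann hr hB, finrank_ann hr hB] at hdims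
  omega

end Annihilator

section Flags

variable {V : Type*} [AddCommGroup V] [Module ℂ V] {m : ℕ} {B : LinearMap.BilinForm ℂ V}

lemma ann_eq_rev_of_annFlag_eq {F : Fin (2 * m + 1) → Submodule ℂ V}
    (hF : annFlag m B F = F) (i : Fin (2 * m + 1)) : ann B (F i) = F i.rev := by
  simpa [annFlag] using congrFun hF i.rev

def IsTransverse (m : ℕ) (W : Submodule ℂ V) (F : Fin (2 * m + 1) → Submodule ℂ V) : Prop :=
  ∀ j : Fin (2 * m + 1), finrank ℂ W + j ≤ 2 * m → Disjoint W (F j)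

/-- The flag `e₀ ⊂ ⋯ ⊂ e_m ⊂ ∠(e_{m-1}) ⊂ ⋯ ⊂ ∠(e₀)`. -/
def completeFlag (m : ℕ) (B : LinearMap.BilinForm ℂ V) (e : ℕ → Submodule ℂ V) :
    Fin (2 * m + 1) → Submodule ℂ V :=
  fun i => if (i : ℕ) ≤ m then e i else ann B (e i.rev)

variable {e : ℕ → Submodule ℂ V}

lemma completeFlag_of_le {i : Fin (2 * m + 1)} (hi : (i : ℕ) ≤ m) :
    completeFlag m B e i = e i :=
  if_pos hi

lemma completeFlag_of_lt {i : Fin (2 * m + 1)} (hi : m < i) :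
    completeFlag m B e i = ann B (e i.rev) :=
  if_neg (by omega)

lemma monotone_completeFlag (he : Monotone e) (hLag : e m ≤ ann B (e m)) :
    Monotone (completeFlag m B e) := by
  intro i j hij
  rw [Fin.le_def] at hij
  simp only [completeFlag]
  split_ifs with hi hj hj
  · exact he hij
  · exact (he hi).trans (hLag.trans (ann_antitone (he (by rw [Fin.val_rev]; omega))))
  · omega
  · exact ann_antitone (he (by simp only [Fin.val_rev]; omega))

variable [FiniteDimensional ℂ V]

theorem isFullFlag_of_monotone (hdim : finrank ℂ V = 2 * m) {E : Fin (2 * m + 1) → Submodule ℂ V}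
    (hE : Monotone E) (hEr : ∀ i, finrank ℂ (E i) = i) : IsFullFlag m E :=
  ⟨finrank_eq_zero.1 (hEr 0), eq_top_of_finrank_eq ((hEr _).trans (by simp [hdim])),
    fun i j hij => lt_of_le_of_finrank_lt_finrank (hE hij.le) (by rw [hEr, hEr]; exact hij), hEr⟩

theorem disjoint_rev_of_disjoint_rev (hdim : finrank ℂ V = 2 * m) (hr : B.IsRefl)
    (hB : B.Nondegenerate) {E F : Fin (2 * m + 1) → Submodule ℂ V}
    (hE : annFlag m B E = E) (hF : annFlag m B F = F) (hEr : ∀ i, finrank ℂ (E i) = i)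
    (hFr : ∀ i, finrank ℂ (F i) = i) {i : Fin (2 * m + 1)} (h : Disjoint (E i) (F i.rev)) :
    Disjoint (E i.rev) (F i) := by
  have htop : E i ⊔ F i.rev = ⊤ :=
    eq_top_of_disjoint _ _ (by rw [hEr, hFr, Fin.val_rev, hdim]; omega) h
  have hFi : F i = ann B (F i.rev) := by rw [ann_eq_rev_of_annFlag_eq hF, Fin.rev_rev]
  rw [disjoint_iff, ← ann_eq_rev_of_annFlag_eq hE, hFi, ← ann_sup, htop, ann_top hr hB]

theorem exists_isotropic_transverse_succ (hdim : finrank ℂ V = 2 * m) (halt : B.IsAlt)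
    (hB : B.Nondegenerate) {a : ℕ} {F : Fin a → Fin (2 * m + 1) → Submodule ℂ V}
    (hF : ∀ k, Monotone (F k)) (hFr : ∀ k j, finrank ℂ (F k j) = j)
    (hiso : ∀ k, annFlag m B (F k) = F k) {W : Submodule ℂ V} (hW : W ≤ ann B W)
    (hWF : ∀ k, IsTransverse m W (F k)) (hlt : finrank ℂ W < m) :
    ∃ W', W ≤ W' ∧ (W' ≤ ann B W' ∧ ∀ k, IsTransverse m W' (F k)) ∧
      finrank ℂ W' = finrank ℂ W + 1 := by
  have hr := halt.isRefl
  let j₀ : Fin (2 * m + 1) := ⟨2 * m - (finrank ℂ W + 1), by omega⟩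
  have hnot : ∀ o : Option (Fin a), ¬ ann B W ≤ o.elim W fun k => F k j₀ ⊔ W := by
    rintro (_ | k)
    · rw [Option.elim_none]
      intro hle
      have := finrank_mono hle
      rw [finrank_ann hr hB, hdim] at this
      omega
    · rw [Option.elim_some, sup_comm]
      refine not_ann_le_sup hr hB ?_ (by rw [hFr, hdim, Fin.val_mk]; omega)
      rw [ann_eq_rev_of_annFlag_eq (hiso k)]
      exact hWF k _ (by simp only [j₀, Fin.val_rev]; omega)
  obtain ⟨v, hvA, hv⟩ := exists_mem_forall_notMem_of_forall_not_le _ _ hnot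
  have hvW : v ∉ W := hv none
  refine ⟨W ⊔ ℂ ∙ v, le_sup_left, ⟨sup_span_le_ann_sup_span halt hW hvA, fun k j hj => ?_⟩,
    finrank_sup_span_singleton hvW⟩
  rw [finrank_sup_span_singleton hvW] at hj
  have hj₀ : j ≤ j₀ := Fin.le_def.2 (by show (j : ℕ) ≤ 2 * m - (finrank ℂ W + 1); omega)
  have hWj₀ : Disjoint (F k j₀) W := (hWF k j₀ (by simp only [j₀]; omega)).symm
  exact (hWj₀.disjoint_sup_right_of_disjoint_sup_left
    (disjoint_span_singleton_of_notMem (hv (some k)))).symm.mono_right (hF k hj₀)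

lemma finrank_completeFlag (hdim : finrank ℂ V = 2 * m) (hr : B.IsRefl) (hB : B.Nondegenerate)
    (he : ∀ i, finrank ℂ (e i) = min i m) (i : Fin (2 * m + 1)) :
    finrank ℂ (completeFlag m B e i) = i := by
  rcases le_or_gt (i : ℕ) m with hi | hi
  · rw [completeFlag_of_le hi, he]
    omega
  · rw [completeFlag_of_lt hi, finrank_ann hr hB, hdim, he, Fin.val_rev]
    omega

lemma annFlag_completeFlag (hr : B.IsRefl) (hB : B.Nondegenerate) (hLag : ann B (e m) = e m) :
    annFlag m B (completeFlag m B e) = completeFlag m B e := by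
  funext i
  rw [annFlag]
  rcases lt_trichotomy (i : ℕ) m with hi | hi | hi
  · rw [completeFlag_of_lt (i := i.rev) (by rw [Fin.val_rev]; omega), Fin.rev_rev, ann_ann hr hB,
      completeFlag_of_le hi.le]
  · rw [show i.rev = i from Fin.ext (by rw [Fin.val_rev]; omega), completeFlag_of_le hi.le, hi,
      hLag]
  · rw [completeFlag_of_le (i := i.rev) (by rw [Fin.val_rev]; omega), completeFlag_of_lt hi]

theorem disjoint_completeFlag_rev (hdim : finrank ℂ V = 2 * m) (hr : B.IsRefl)
    (hB : B.Nondegenerate) (he : ∀ i, finrank ℂ (e i) = min i m) (hLag : ann B (e m) = e m)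
    {F : Fin (2 * m + 1) → Submodule ℂ V} (hF : annFlag m B F = F)
    (hFr : ∀ i, finrank ℂ (F i) = i) (heF : ∀ i, IsTransverse m (e i) F) (i : Fin (2 * m + 1)) :
    Disjoint (completeFlag m B e i) (F i.rev) := by
  have hlow : ∀ i : Fin (2 * m + 1), (i : ℕ) ≤ m → Disjoint (completeFlag m B e i) (F i.rev) :=
    fun i hi => by
      rw [completeFlag_of_le hi]
      exact heF i _ (by rw [he, Fin.val_rev]; omega)
  by_cases hi : (i : ℕ) ≤ m
  · exact hlow i hi
  · simpa only [Fin.rev_rev] using disjoint_rev_of_disjoint_rev hdim hr hB (annFlag_completeFlag hr hB hLag) hF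
      (finrank_completeFlag hdim hr hB he) hFr (hlow i.rev (by rw [Fin.val_rev]; omega))

end Flags

theorem stmt9_general (m : ℕ) (V : Type*) [AddCommGroup V] [Module ℂ V]
    [FiniteDimensional ℂ V] (hdim : finrank ℂ V = 2 * m)
    (B : LinearMap.BilinForm ℂ V) (halt : B.IsAlt) (hB : B.Nondegenerate)
    (a : ℕ) (F : Fin a → Fin (2 * m + 1) → Submodule ℂ V)
    (hF : ∀ k, IsFullFlag m (F k)) (hiso : ∀ k, annFlag m B (F k) = F k) :
    ∃ E : Fin (2 * m + 1) → Submodule ℂ V, IsFullFlag m E ∧ annFlag m B E = E ∧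
      ∀ (k : Fin a) (i j : Fin (2 * m + 1)),
        (finrank ℂ ↥(E i ⊓ F k j) : ℤ)
          = max 0 (((i : ℕ) : ℤ) + ((j : ℕ) : ℤ) - 2 * m) := by
  have hr : B.IsRefl := halt.isRefl
  have hFmono k : Monotone (F k) := (hF k).2.2.1.monotone
  have hFr k : ∀ j, finrank ℂ (F k j) = j := (hF k).2.2.2
  obtain ⟨e, he_mono, he⟩ := exists_monotone_seq_of_forall_exists_succ
    (fun W => W ≤ ann B W ∧ ∀ k, IsTransverse m W (F k)) (fun W => finrank ℂ W) m
    ⟨bot_le, fun _ _ _ => disjoint_bot_left⟩ (finrank_bot ℂ V)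
    fun W hW hlt => exists_isotropic_transverse_succ hdim halt hB hFmono hFr hiso hW.1 hW.2 hlt
  have hLag : ann B (e m) = e m :=
    ann_eq_self_of_le_ann hdim hr hB (he m).1.1 (by rw [(he m).2, min_self])
  have hEmono := monotone_completeFlag (B := B) he_mono hLag.ge
  have hEr := finrank_completeFlag hdim hr hB fun i => (he i).2
  refine ⟨completeFlag m B e, isFullFlag_of_monotone hdim hEmono hEr,
    annFlag_completeFlag hr hB hLag, fun k i j => ?_⟩
  rw [finrank_inf_eq_of_forall_disjoint_rev hdim hEmono (hFmono k) hEr (hFr k)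
    (disjoint_completeFlag_rev hdim hr hB (fun i => (he i).2) hLag (hiso k) (hFr k)
      fun i => (he i).1.2 k)]
  omega

theorem stmt9 (m : ℕ) (hm : 1 ≤ m) (V : Type*) [AddCommGroup V] [Module ℂ V]
    [FiniteDimensional ℂ V] (hdim : finrank ℂ V = 2 * m)
    (B : LinearMap.BilinForm ℂ V) (halt : B.IsAlt) (hB : B.Nondegenerate)
    (a : ℕ) (F : Fin a → Fin (2 * m + 1) → Submodule ℂ V)
    (hF : ∀ k, IsFullFlag m (F k)) (hiso : ∀ k, annFlag m B (F k) = F k) :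
    ∃ E : Fin (2 * m + 1) → Submodule ℂ V, IsFullFlag m E ∧ annFlag m B E = E ∧
      ∀ (k : Fin a) (i j : Fin (2 * m + 1)),
        (finrank ℂ ↥(E i ⊓ F k j) : ℤ)
          = max 0 (((i : ℕ) : ℤ) + ((j : ℕ) : ℤ) - 2 * m) :=
  stmt9_general m V hdim B halt hB a F hF hiso
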